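/- Let g: {-1,1}^k → {-1,1} with g(x) = x_k if all bits of x are equal and g(x) = -x_k otherwise. Define linear forms L_0(x) = x_1 + x_k and L_i(x) = x_i - x_{i+1} for 1 ≤ i ≤ k-1. Then for every x ∈ {-1,1}^k, g(x) equals the sign of the last nonzero element in the sequence L_0(x), L_1(x), ..., L_{k-1}(x), and this sequence is never all zero. -/
import Mathlib


/-- For `x ∈ {-1,1}^k`, with linear forms `L_0(x) = x_1 + x_k` and `L_i(x) = x_i - x_{i+1}`
(here 0-indexed: `L i = x (i-1) - x i` for `i ≥ 1`), the sequence `L_0(x), ..., L_{k-1}(x)`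
is not identically zero, and the function `g` (which is `x_k` if all bits are equal and
`-x_k` otherwise) equals the sign of its last nonzero element. -/
theorem stmt7 (k : ℕ) (hk : 2 ≤ k) (x : Fin k → ℤ)
    (hx : ∀ i, x i = 1 ∨ x i = -1)
    (L : Fin k → ℤ)
    (hL0 : L ⟨0, by omega⟩ = x ⟨0, by omega⟩ + x ⟨k - 1, by omega⟩)
    (hL : ∀ i : Fin k, 1 ≤ (i : ℕ) → L i = x ⟨(i : ℕ) - 1, by omega⟩ - x i) :
    ∃ J : Fin k, L J ≠ 0 ∧ (∀ j : Fin k, J < j → L j = 0) ∧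
      (if ∀ i j, x i = x j then x ⟨k - 1, by omega⟩ else -x ⟨k - 1, by omega⟩) =
        (if 0 < L J then 1 else -1) := by
  by_cases hall : ∀ i j, x i = x j
  · refine ⟨⟨0, by omega⟩, ?_, ?_, ?_⟩
    · rw [hL0, hall ⟨k-1, by omega⟩ ⟨0, by omega⟩]
      rcases hx ⟨0, by omega⟩ with h | h <;> rw [h] <;> norm_num
    · intro j hj
      have h1 : 1 ≤ (j:ℕ) := hj
      rw [hL j h1, hall ⟨(j:ℕ)-1, by omega⟩ j, sub_self]
    · rw [if_pos hall, hL0, hall ⟨k-1, by omega⟩ ⟨0, by omega⟩]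
      rcases hx ⟨0, by omega⟩ with h | h <;> rw [h] <;> norm_num
  · have hcons : ∃ n, 1 ≤ n ∧ ∃ (hn : n < k), x ⟨n-1, by omega⟩ ≠ x ⟨n, hn⟩ := by
      by_contra hc
      push_neg at hc
      apply hall
      have h0 : ∀ n (hn : n < k), x ⟨n, hn⟩ = x ⟨0, by omega⟩ := by
        intro n
        induction n with
        | zero => intro hn; rfl
        | succ m ih =>
          intro hn
          have := hc (m+1) (by omega) hn
          simp only [Nat.add_sub_cancel] at this
          rw [← this]
          exact ih (by omega)
      intro i j
      rw [show i = (⟨i.val, i.isLt⟩ : Fin k) from rfl, h0 i.val i.isLt,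
        show j = (⟨j.val, j.isLt⟩ : Fin k) from rfl, h0 j.val j.isLt]
    set y : ℕ → ℤ := fun n => if h : n < k then x ⟨n, h⟩ else 0 with hy
    set P : ℕ → Prop := fun n => 1 ≤ n ∧ n < k ∧ y (n-1) ≠ y n with hPdef
    have : DecidablePred P := fun n => by unfold P; infer_instance
    obtain ⟨n, hn1, hnk, hne⟩ := hcons
    have hPn : P n := by
      refine ⟨hn1, hnk, ?_⟩
      simpa only [hy, dif_pos (show n - 1 < k by omega), dif_pos hnk] using hne
    set N := Nat.findGreatest P (k-1) with hN
    have hPN : P N := Nat.findGreatest_spec (by omega : n ≤ k - 1) hPn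
    obtain ⟨hN1, hNk, hNne⟩ := hPN
    have hgreat : ∀ m, N < m → m < k → ¬ P m := fun m h1 h2 =>
      Nat.findGreatest_is_greatest h1 (by omega)
    have hconst : ∀ m, N ≤ m → ∀ hm : m < k, x ⟨m, hm⟩ = x ⟨N, hNk⟩ := by
      intro m hm
      induction m, hm using Nat.le_induction with
      | base => intro _; rfl
      | succ m hNm ih =>
        intro hm1
        have hnp : ¬ P (m+1) := hgreat (m+1) (by omega) hm1
        have hym : y m = y (m+1) := by
          by_contra hne2
          exact hnp ⟨by omega, hm1, by simpa using hne2⟩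
        have hmk : m < k := by omega
        rw [hy] at hym
        simp only [dif_pos hmk, dif_pos hm1] at hym
        rw [← hym]
        exact ih hmk
    have hxk : x ⟨k-1, by omega⟩ = x ⟨N, hNk⟩ := hconst (k-1) (by omega) (by omega)
    refine ⟨⟨N, hNk⟩, ?_, ?_, ?_⟩
    · rw [hL ⟨N, hNk⟩ hN1]
      simp only [hy, dif_pos (show N - 1 < k by omega), dif_pos hNk] at hNne
      exact sub_ne_zero.mpr hNne
    · intro j hj
      have hjN : N < (j:ℕ) := hj
      have hnp : ¬ P (j:ℕ) := hgreat _ hjN j.isLt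
      have hj1 : 1 ≤ (j:ℕ) := by omega
      rw [hL j hj1]
      have : y ((j:ℕ)-1) = y (j:ℕ) := by
        by_contra hne2
        exact hnp ⟨hj1, j.isLt, hne2⟩
      rw [hy] at this
      simp only [dif_pos (show (j:ℕ)-1 < k by omega), dif_pos j.isLt] at this
      simp only [this, Fin.eta, sub_self]
    · rw [if_neg hall, hL ⟨N, hNk⟩ hN1, hxk]
      simp only [hy, dif_pos (show N - 1 < k by omega), dif_pos hNk] at hNne
      rcases hx ⟨N-1, by omega⟩ with h1 | h1 <;> rcases hx ⟨N, hNk⟩ with h2 | h2 <;>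
        rw [h1, h2] <;> first | (exact absurd (h1.trans h2.symm) hNne) | norm_num
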